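/- arXiv:2507.00276 — 2 statements merged into one kernel-verified Lean document; each statement's English description precedes it below -/
import Mathlib

section
/- For all real numbers γ, β, β_p and every function g : ℝ → ℝ, the magnetization statistics are symmetric under exchange of β and β_p: Σ_τ Z_τ(γ) · (exp(β_p·Σ_{e∈E} τ(e)) / Z_τ(β_p)) · (Σ_S g((1/N)·Σ_{v∈V} S(v)) · exp(β·H_τ(S))) / Z_τ(β) = Σ_τ Z_τ(γ) · (exp(β·Σ_{e∈E} τ(e)) / Z_τ(β)) · (Σ_S g((1/N)·Σ_{v∈V} S(v)) · exp(β_p·H_τ(S))) / Z_τ(β_p). -/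
open Finset

/-- Ising energy H_t(S), spins valued in the units of the integers, i.e. {-1, 1}. -/
noncomputable def isingH {V E : Type*} [Fintype E] (i j : E → V)
    (τ : E → ℤˣ) (S : V → ℤˣ) : ℝ :=
  ∑ e, ((τ e : ℤ) : ℝ) * ((S (i e) : ℤ) : ℝ) * ((S (j e) : ℤ) : ℝ)

/-- Partition function Z_t(b). -/
noncomputable def isingZ {V E : Type*} [Fintype V] [DecidableEq V] [Fintype E]
    (i j : E → V) (β : ℝ) (τ : E → ℤˣ) : ℝ :=
  ∑ S : V → ℤˣ, Real.exp (β * isingH i j τ S)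

section Aux

variable {V E : Type*} [Fintype V] [DecidableEq V] [Fintype E] (i j : E → V)

lemma units_sq_cast (u : ℤˣ) : ((u : ℤ) : ℝ) * ((u : ℤ) : ℝ) = 1 := by
  rw [← Int.cast_mul, ← Units.val_mul, Int.units_mul_self, Units.val_one, Int.cast_one]

/-- Gauge transformation of the disorder by a spin configuration. -/
def gaugeT (S : V → ℤˣ) (τ : E → ℤˣ) : E → ℤˣ := fun e => τ e * (S (i e) * S (j e))

/-- The gauge transformation as an equivalence. -/
def gaugeE (S : V → ℤˣ) : (E → ℤˣ) ≃ (E → ℤˣ) :=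
  Equiv.piCongrRight fun e => Equiv.mulRight (S (i e) * S (j e))

lemma gaugeE_apply (S : V → ℤˣ) (τ : E → ℤˣ) : gaugeE i j S τ = gaugeT i j S τ := rfl

lemma H_gauge (τ : E → ℤˣ) (S T : V → ℤˣ) :
    isingH i j (gaugeT i j S τ) T = isingH i j τ (fun v => T v * S v) := by
  unfold isingH gaugeT
  refine Finset.sum_congr rfl fun e _ => ?_
  push_cast
  ring

lemma Z_gauge (b : ℝ) (τ : E → ℤˣ) (S : V → ℤˣ) :
    isingZ i j b (gaugeT i j S τ) = isingZ i j b τ := by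
  unfold isingZ
  simp only [H_gauge]
  exact Fintype.sum_equiv (Equiv.piCongrRight fun v => Equiv.mulRight (S v))
    _ _ (fun T => rfl)

lemma sum_gauge (τ : E → ℤˣ) (S : V → ℤˣ) :
    ∑ e, ((gaugeT i j S τ e : ℤ) : ℝ) = isingH i j τ S := by
  unfold isingH gaugeT
  refine Finset.sum_congr rfl fun e _ => ?_
  push_cast
  ring

lemma H_gauge_self (τ : E → ℤˣ) (S : V → ℤˣ) :
    isingH i j (gaugeT i j S τ) S = ∑ e, ((τ e : ℤ) : ℝ) := by
  unfold isingH gaugeT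
  refine Finset.sum_congr rfl fun e _ => ?_
  have h1 := units_sq_cast (S (i e))
  have h2 := units_sq_cast (S (j e))
  push_cast
  linear_combination (((τ e : ℤ) : ℝ) * ((S (j e) : ℤ) : ℝ) * ((S (j e) : ℤ) : ℝ)) * h1
    + ((τ e : ℤ) : ℝ) * h2

end Aux

/-- the magnetization statistics are symmetric under exchange of β and β_p. -/
theorem stmt_8 {V E : Type*} [Fintype V] [DecidableEq V] [Fintype E] [DecidableEq E]
    (i j : E → V) (hij : ∀ e, i e ≠ j e)
    (γ β βp : ℝ) (g : ℝ → ℝ) :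
    ∑ τ : E → ℤˣ,
        isingZ i j γ τ * (Real.exp (βp * ∑ e, ((τ e : ℤ) : ℝ)) / isingZ i j βp τ) *
          ((∑ S : V → ℤˣ,
              g ((1 / (Fintype.card V : ℝ)) * ∑ v, ((S v : ℤ) : ℝ)) *
                Real.exp (β * isingH i j τ S)) / isingZ i j β τ)
      = ∑ τ : E → ℤˣ,
          isingZ i j γ τ * (Real.exp (β * ∑ e, ((τ e : ℤ) : ℝ)) / isingZ i j β τ) *
            ((∑ S : V → ℤˣ,
                g ((1 / (Fintype.card V : ℝ)) * ∑ v, ((S v : ℤ) : ℝ)) *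
                  Real.exp (βp * isingH i j τ S)) / isingZ i j βp τ) := by
  have expand : ∀ (b1 b2 : ℝ) (τ : E → ℤˣ),
      isingZ i j γ τ * (Real.exp (b1 * ∑ e, ((τ e : ℤ) : ℝ)) / isingZ i j b1 τ) *
          ((∑ S : V → ℤˣ,
              g ((1 / (Fintype.card V : ℝ)) * ∑ v, ((S v : ℤ) : ℝ)) *
                Real.exp (b2 * isingH i j τ S)) / isingZ i j b2 τ)
        = ∑ S : V → ℤˣ,
            isingZ i j γ τ / (isingZ i j b1 τ * isingZ i j b2 τ) *
              (g ((1 / (Fintype.card V : ℝ)) * ∑ v, ((S v : ℤ) : ℝ)) *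
                (Real.exp (b1 * ∑ e, ((τ e : ℤ) : ℝ)) * Real.exp (b2 * isingH i j τ S))) := by
    intro b1 b2 τ
    rw [Finset.sum_div, Finset.mul_sum]
    exact Finset.sum_congr rfl fun S _ => by ring
  calc
    ∑ τ : E → ℤˣ,
        isingZ i j γ τ * (Real.exp (βp * ∑ e, ((τ e : ℤ) : ℝ)) / isingZ i j βp τ) *
          ((∑ S : V → ℤˣ,
              g ((1 / (Fintype.card V : ℝ)) * ∑ v, ((S v : ℤ) : ℝ)) *
                Real.exp (β * isingH i j τ S)) / isingZ i j β τ)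
      = ∑ τ : E → ℤˣ, ∑ S : V → ℤˣ,
            isingZ i j γ τ / (isingZ i j βp τ * isingZ i j β τ) *
              (g ((1 / (Fintype.card V : ℝ)) * ∑ v, ((S v : ℤ) : ℝ)) *
                (Real.exp (βp * ∑ e, ((τ e : ℤ) : ℝ)) * Real.exp (β * isingH i j τ S))) :=
        Finset.sum_congr rfl fun τ _ => expand βp β τ
    _ = ∑ S : V → ℤˣ, ∑ τ : E → ℤˣ,
            isingZ i j γ τ / (isingZ i j βp τ * isingZ i j β τ) *
              (g ((1 / (Fintype.card V : ℝ)) * ∑ v, ((S v : ℤ) : ℝ)) *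
                (Real.exp (βp * ∑ e, ((τ e : ℤ) : ℝ)) * Real.exp (β * isingH i j τ S))) :=
        Finset.sum_comm
    _ = ∑ S : V → ℤˣ, ∑ τ : E → ℤˣ,
            isingZ i j γ τ / (isingZ i j β τ * isingZ i j βp τ) *
              (g ((1 / (Fintype.card V : ℝ)) * ∑ v, ((S v : ℤ) : ℝ)) *
                (Real.exp (β * ∑ e, ((τ e : ℤ) : ℝ)) * Real.exp (βp * isingH i j τ S))) := by
        refine Finset.sum_congr rfl fun S _ => ?_
        refine (Fintype.sum_equiv (gaugeE i j S) _ _ fun τ => ?_).symm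
        rw [gaugeE_apply, Z_gauge, Z_gauge, Z_gauge, sum_gauge, H_gauge_self]
        ring
    _ = ∑ τ : E → ℤˣ, ∑ S : V → ℤˣ,
            isingZ i j γ τ / (isingZ i j β τ * isingZ i j βp τ) *
              (g ((1 / (Fintype.card V : ℝ)) * ∑ v, ((S v : ℤ) : ℝ)) *
                (Real.exp (β * ∑ e, ((τ e : ℤ) : ℝ)) * Real.exp (βp * isingH i j τ S))) :=
        Finset.sum_comm
    _ = _ := Finset.sum_congr rfl fun τ _ => (expand β βp τ).symm
end

section
/- For every real β, the internal energy on the Nishimori line of the ±J Edwards–Anderson model satisfies the exact identity Σ_τ (exp(β·Σ_{e∈E} τ(e)) / (2·cosh β)^{N_B}) · (Σ_S H_τ(S)·exp(β·H_τ(S))) / Z_τ(β) = N_B · tanh β, where the outer sum runs over all disorder configurations τ : E → {−1, 1}. -/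
open Finset
set_option maxHeartbeats 1000000

private lemma sumUnits (f : ℤˣ → ℝ) : ∑ u : ℤˣ, f u = f 1 + f (-1) := by
  have h : (univ : Finset ℤˣ) = {1, -1} := by decide
  rw [h, Finset.sum_insert (by decide), Finset.sum_singleton]

private lemma edge_cosh (β x : ℝ) (hx : x = 1 ∨ x = -1) :
    ∑ u : ℤˣ, Real.exp (β * (((u : ℤ) : ℝ) * x)) = 2 * Real.cosh β := by
  rw [sumUnits]
  rcases hx with h | h <;> simp [h, Real.cosh_eq] <;> ring

private lemma edge_sinh (β x : ℝ) (hx : x = 1 ∨ x = -1) :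
    ∑ u : ℤˣ, (((u : ℤ) : ℝ) * x) * Real.exp (β * (((u : ℤ) : ℝ) * x)) = 2 * Real.sinh β := by
  rw [sumUnits]
  rcases hx with h | h <;> simp [h, Real.sinh_eq] <;> ring

private lemma sum_pi_prod {E : Type*} [Fintype E] [DecidableEq E] (h : E → ℤˣ → ℝ) :
    ∑ τ : E → ℤˣ, ∏ e, h e (τ e) = ∏ e, ∑ u : ℤˣ, h e u := by
  rw [Finset.prod_univ_sum, Fintype.piFinset_univ]

private lemma unit_pm (u : ℤˣ) : ((u : ℤ) : ℝ) = 1 ∨ ((u : ℤ) : ℝ) = -1 := by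
  rcases Int.units_eq_one_or u with h | h <;> simp [h]

section
variable {V E : Type*} [Fintype V] [DecidableEq V] [Fintype E] [DecidableEq E]
  (i j : E → V) (β : ℝ)

private lemma H_as_sum (τ : E → ℤˣ) (S : V → ℤˣ) :
    isingH i j τ S = ∑ e, ((τ e : ℤ) : ℝ) * (((S (i e) : ℤ) : ℝ) * ((S (j e) : ℤ) : ℝ)) := by
  unfold isingH; exact Finset.sum_congr rfl fun e _ => by ring

private lemma x_pm (S : V → ℤˣ) (e : E) :
    ((S (i e) : ℤ) : ℝ) * ((S (j e) : ℤ) : ℝ) = 1 ∨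
    ((S (i e) : ℤ) : ℝ) * ((S (j e) : ℤ) : ℝ) = -1 := by
  rcases unit_pm (S (i e)) with h1 | h1 <;> rcases unit_pm (S (j e)) with h2 | h2 <;>
    simp [h1, h2]

private lemma exp_H_prod (τ : E → ℤˣ) (S : V → ℤˣ) :
    Real.exp (β * isingH i j τ S)
      = ∏ e, Real.exp (β * (((τ e : ℤ) : ℝ) * (((S (i e) : ℤ) : ℝ) * ((S (j e) : ℤ) : ℝ)))) := by
  rw [H_as_sum, Finset.mul_sum, Real.exp_sum]

/-- Per-S partition sum over disorder. -/
private lemma sum_tau_exp (S : V → ℤˣ) :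
    ∑ τ : E → ℤˣ, Real.exp (β * isingH i j τ S) = (2 * Real.cosh β) ^ (Fintype.card E) := by
  calc ∑ τ : E → ℤˣ, Real.exp (β * isingH i j τ S)
      = ∑ τ : E → ℤˣ, ∏ e, Real.exp (β * (((τ e : ℤ) : ℝ) *
          (((S (i e) : ℤ) : ℝ) * ((S (j e) : ℤ) : ℝ)))) := by
        exact Finset.sum_congr rfl fun τ _ => exp_H_prod i j β τ S
    _ = ∏ e, ∑ u : ℤˣ, Real.exp (β * (((u : ℤ) : ℝ) *
          (((S (i e) : ℤ) : ℝ) * ((S (j e) : ℤ) : ℝ)))) :=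
        sum_pi_prod (fun e u => Real.exp (β * (((u : ℤ) : ℝ) *
          (((S (i e) : ℤ) : ℝ) * ((S (j e) : ℤ) : ℝ)))))
    _ = ∏ e : E, (2 * Real.cosh β) :=
        Finset.prod_congr rfl fun e _ => edge_cosh β _ (x_pm i j S e)
    _ = (2 * Real.cosh β) ^ (Fintype.card E) := by
        rw [Finset.prod_const, Finset.card_univ]

private lemma pow_pred_aux (β : ℝ) (n : ℕ) :
    (n : ℝ) * (2 * Real.sinh β) * (2 * Real.cosh β) ^ (n - 1)
      = (n : ℝ) * Real.tanh β * (2 * Real.cosh β) ^ n := by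
  cases n with
  | zero => simp
  | succ m =>
    have hc : Real.cosh β ≠ 0 := (Real.cosh_pos β).ne'
    rw [Nat.succ_sub_one, pow_succ]
    rw [Real.tanh_eq_sinh_div_cosh]
    field_simp

/-- Per-S weighted-energy sum over disorder. -/
private lemma sum_tau_H_exp (S : V → ℤˣ) :
    ∑ τ : E → ℤˣ, isingH i j τ S * Real.exp (β * isingH i j τ S)
      = (Fintype.card E : ℝ) * Real.tanh β * (2 * Real.cosh β) ^ (Fintype.card E) := by
  set x : E → ℝ := fun e => ((S (i e) : ℤ) : ℝ) * ((S (j e) : ℤ) : ℝ) with hx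
  have step1 : ∀ τ : E → ℤˣ, isingH i j τ S * Real.exp (β * isingH i j τ S)
      = ∑ e, (((τ e : ℤ) : ℝ) * x e) * ∏ e', Real.exp (β * (((τ e' : ℤ) : ℝ) * x e')) := by
    intro τ
    rw [exp_H_prod i j β τ S, H_as_sum, Finset.sum_mul]
  calc ∑ τ : E → ℤˣ, isingH i j τ S * Real.exp (β * isingH i j τ S)
      = ∑ τ : E → ℤˣ, ∑ e, (((τ e : ℤ) : ℝ) * x e) *
          ∏ e', Real.exp (β * (((τ e' : ℤ) : ℝ) * x e')) :=
        Finset.sum_congr rfl fun τ _ => step1 τ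
    _ = ∑ e, ∑ τ : E → ℤˣ, (((τ e : ℤ) : ℝ) * x e) *
          ∏ e', Real.exp (β * (((τ e' : ℤ) : ℝ) * x e')) := Finset.sum_comm
    _ = (Fintype.card E : ℝ) * Real.tanh β * (2 * Real.cosh β) ^ (Fintype.card E) := by
        have inner : ∀ e : E, ∑ τ : E → ℤˣ, (((τ e : ℤ) : ℝ) * x e) *
            ∏ e', Real.exp (β * (((τ e' : ℤ) : ℝ) * x e'))
            = 2 * Real.sinh β * (2 * Real.cosh β) ^ (Fintype.card E - 1) := by
          intro e
          set k : E → ℤˣ → ℝ := fun e' u =>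
            if e' = e then (((u : ℤ) : ℝ) * x e) * Real.exp (β * (((u : ℤ) : ℝ) * x e))
            else Real.exp (β * (((u : ℤ) : ℝ) * x e')) with hk
          have hterm : ∀ τ : E → ℤˣ, (((τ e : ℤ) : ℝ) * x e) *
              ∏ e', Real.exp (β * (((τ e' : ℤ) : ℝ) * x e'))
              = ∏ e', k e' (τ e') := by
            intro τ
            have h1 : ∏ e', k e' (τ e') = k e (τ e) * ∏ e' ∈ univ.erase e, k e' (τ e') :=
              (Finset.mul_prod_erase univ (fun e' => k e' (τ e')) (Finset.mem_univ e)).symm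
            have h2 : ∏ e', Real.exp (β * (((τ e' : ℤ) : ℝ) * x e'))
                = Real.exp (β * (((τ e : ℤ) : ℝ) * x e)) *
                  ∏ e' ∈ univ.erase e, Real.exp (β * (((τ e' : ℤ) : ℝ) * x e')) :=
              (Finset.mul_prod_erase univ
                (fun e' => Real.exp (β * (((τ e' : ℤ) : ℝ) * x e'))) (Finset.mem_univ e)).symm
            have h3 : ∏ e' ∈ univ.erase e, k e' (τ e')
                = ∏ e' ∈ univ.erase e, Real.exp (β * (((τ e' : ℤ) : ℝ) * x e')) :=
              Finset.prod_congr rfl fun e' he' => by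
                simp only [hk]
                rw [if_neg (Finset.ne_of_mem_erase he')]
            have h4 : k e (τ e)
                = (((τ e : ℤ) : ℝ) * x e) * Real.exp (β * (((τ e : ℤ) : ℝ) * x e)) := by
              simp [hk]
            rw [h1, h2, h3, h4]
            ring
          calc ∑ τ : E → ℤˣ, (((τ e : ℤ) : ℝ) * x e) *
                ∏ e', Real.exp (β * (((τ e' : ℤ) : ℝ) * x e'))
              = ∑ τ : E → ℤˣ, ∏ e', k e' (τ e') := Finset.sum_congr rfl fun τ _ => hterm τ
            _ = ∏ e', ∑ u : ℤˣ, k e' u := sum_pi_prod k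
            _ = 2 * Real.sinh β * (2 * Real.cosh β) ^ (Fintype.card E - 1) := by
                rw [← Finset.mul_prod_erase univ _ (Finset.mem_univ e)]
                have h1 : ∑ u : ℤˣ, k e u = 2 * Real.sinh β := by
                  simp only [hk, if_pos rfl]
                  exact edge_sinh β _ (x_pm i j S e)
                have h2 : ∏ e' ∈ univ.erase e, (∑ u : ℤˣ, k e' u)
                    = (2 * Real.cosh β) ^ (Fintype.card E - 1) := by
                  have : ∀ e' ∈ univ.erase e, (∑ u : ℤˣ, k e' u) = 2 * Real.cosh β := by
                    intro e' he'
                    simp only [hk, if_neg (Finset.ne_of_mem_erase he')]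
                    exact edge_cosh β _ (x_pm i j S e')
                  rw [Finset.prod_congr rfl this, Finset.prod_const,
                    Finset.card_erase_of_mem (Finset.mem_univ e), Finset.card_univ]
                rw [h1, h2]
        rw [Finset.sum_congr rfl fun e _ => inner e, Finset.sum_const, Finset.card_univ,
          nsmul_eq_mul]
        rw [← mul_assoc]
        exact pow_pred_aux β _
end

section
variable {V E : Type*} [Fintype V] [DecidableEq V] [Fintype E] [DecidableEq E]

private def nisGauge (i j : E → V) (σ : V → ℤˣ) (τ : E → ℤˣ) : E → ℤˣ :=
  fun e => τ e * (σ (i e) * σ (j e))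

private def nisGaugeEquiv (i j : E → V) (σ : V → ℤˣ) : (E → ℤˣ) ≃ (E → ℤˣ) :=
  Function.Involutive.toPerm (nisGauge i j σ) (by
    intro τ; funext e
    show (τ e * (σ (i e) * σ (j e))) * (σ (i e) * σ (j e)) = τ e
    rw [mul_assoc, Int.units_mul_self, mul_one])

private def flipEquiv (σ : V → ℤˣ) : (V → ℤˣ) ≃ (V → ℤˣ) :=
  Function.Involutive.toPerm (fun S v => σ v * S v) (by
    intro S; funext v
    show σ v * (σ v * S v) = S v
    rw [← mul_assoc, Int.units_mul_self, one_mul])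

private lemma H_gauge_s10 (i j : E → V) (σ τ : E → ℤˣ → ℤˣ) : True := trivial

private lemma isingH_gauge (i j : E → V) (σ : V → ℤˣ) (τ : E → ℤˣ) (S : V → ℤˣ) :
    isingH i j (nisGauge i j σ τ) S = isingH i j τ (fun v => σ v * S v) := by
  unfold isingH nisGauge
  refine Finset.sum_congr rfl fun e _ => ?_
  push_cast [Units.val_mul]
  ring

private lemma isingZ_gauge (i j : E → V) (β : ℝ) (σ : V → ℤˣ) (τ : E → ℤˣ) :
    isingZ i j β (nisGauge i j σ τ) = isingZ i j β τ := by
  unfold isingZ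
  refine Fintype.sum_equiv (flipEquiv σ) _ _ fun S => ?_
  rw [isingH_gauge]
  rfl

private lemma isingA_gauge (i j : E → V) (β : ℝ) (σ : V → ℤˣ) (τ : E → ℤˣ) :
    (∑ S : V → ℤˣ, isingH i j (nisGauge i j σ τ) S * Real.exp (β * isingH i j (nisGauge i j σ τ) S))
      = ∑ S : V → ℤˣ, isingH i j τ S * Real.exp (β * isingH i j τ S) := by
  refine Fintype.sum_equiv (flipEquiv σ) _ _ fun S => ?_
  rw [isingH_gauge]
  rfl

private lemma sum_sigma_weight (i j : E → V) (β : ℝ) (τ : E → ℤˣ) :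
    ∑ σ : V → ℤˣ, Real.exp (β * ∑ e, (((nisGauge i j σ τ) e : ℤ) : ℝ)) = isingZ i j β τ := by
  unfold isingZ
  refine Finset.sum_congr rfl fun σ _ => ?_
  congr 2
  unfold isingH nisGauge
  refine Finset.sum_congr rfl fun e _ => ?_
  push_cast [Units.val_mul]
  ring
end

/-- internal energy on the Nishimori line of the ±J Edwards-Anderson
model: the disorder average of the thermal average of H_τ equals N_B tanh β. -/
theorem stmt_10 {V E : Type*} [Fintype V] [DecidableEq V] [Fintype E] [DecidableEq E]
    (i j : E → V) (hij : ∀ e, i e ≠ j e)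
    (β : ℝ) :
    ∑ τ : E → ℤˣ,
        (Real.exp (β * ∑ e, ((τ e : ℤ) : ℝ)) / (2 * Real.cosh β) ^ (Fintype.card E)) *
          ((∑ S : V → ℤˣ, isingH i j τ S * Real.exp (β * isingH i j τ S)) /
            isingZ i j β τ)
      = (Fintype.card E : ℝ) * Real.tanh β := by
  set C : ℝ := (2 * Real.cosh β) ^ (Fintype.card E) with hCdef
  have hC : C ≠ 0 := pow_ne_zero _ (by positivity)
  set A : (E → ℤˣ) → ℝ :=
    fun τ => ∑ S : V → ℤˣ, isingH i j τ S * Real.exp (β * isingH i j τ S) with hA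
  have hZpos : ∀ τ : E → ℤˣ, 0 < isingZ i j β τ :=
    fun τ => Finset.sum_pos (fun S _ => Real.exp_pos _) Finset.univ_nonempty
  set L : ℝ := ∑ τ : E → ℤˣ,
      (Real.exp (β * ∑ e, ((τ e : ℤ) : ℝ)) / C) * (A τ / isingZ i j β τ) with hL
  have key1 : ∀ σ : V → ℤˣ,
      L = ∑ τ : E → ℤˣ, (Real.exp (β * isingH i j τ σ) / C) * (A τ / isingZ i j β τ) := by
    intro σ
    rw [hL]
    refine (Fintype.sum_equiv (nisGaugeEquiv i j σ)
      (fun τ => (Real.exp (β * isingH i j τ σ) / C) * (A τ / isingZ i j β τ))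
      (fun τ => (Real.exp (β * ∑ e, ((τ e : ℤ) : ℝ)) / C) * (A τ / isingZ i j β τ))
      fun τ => ?_).symm
    show (Real.exp (β * isingH i j τ σ) / C) * (A τ / isingZ i j β τ)
      = (Real.exp (β * ∑ e, (((nisGauge i j σ τ) e : ℤ) : ℝ)) / C) *
        (A (nisGauge i j σ τ) / isingZ i j β (nisGauge i j σ τ))
    have hsum : ∑ e, (((nisGauge i j σ τ) e : ℤ) : ℝ) = isingH i j τ σ := by
      unfold isingH nisGauge
      refine Finset.sum_congr rfl fun e _ => ?_
      push_cast [Units.val_mul]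
      ring
    rw [hsum, isingZ_gauge]
    simp only [hA]
    rw [isingA_gauge]
  set M : ℝ := (Fintype.card (V → ℤˣ) : ℝ) with hM
  have hMpos : (0 : ℝ) < M := by
    rw [hM]; exact_mod_cast Fintype.card_pos
  have key2 : M * L = ∑ τ : E → ℤˣ, A τ / C := by
    calc M * L = ∑ _σ : V → ℤˣ, L := by rw [Finset.sum_const, Finset.card_univ, nsmul_eq_mul]
      _ = ∑ σ : V → ℤˣ, ∑ τ : E → ℤˣ,
            (Real.exp (β * isingH i j τ σ) / C) * (A τ / isingZ i j β τ) :=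
          Finset.sum_congr rfl fun σ _ => key1 σ
      _ = ∑ τ : E → ℤˣ, ∑ σ : V → ℤˣ,
            (Real.exp (β * isingH i j τ σ) / C) * (A τ / isingZ i j β τ) := Finset.sum_comm
      _ = ∑ τ : E → ℤˣ, A τ / C := by
          refine Finset.sum_congr rfl fun τ _ => ?_
          rw [← Finset.sum_mul, ← Finset.sum_div]
          have : ∑ σ : V → ℤˣ, Real.exp (β * isingH i j τ σ) = isingZ i j β τ := rfl
          rw [this, div_mul_div_comm, mul_comm C (isingZ i j β τ),
            mul_div_mul_left _ _ (ne_of_gt (hZpos τ))]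
  have key3 : ∑ τ : E → ℤˣ, A τ = M * ((Fintype.card E : ℝ) * Real.tanh β * C) := by
    rw [hA]
    simp only
    rw [Finset.sum_comm]
    rw [Finset.sum_congr rfl fun S _ => sum_tau_H_exp i j β S]
    rw [Finset.sum_const, Finset.card_univ, nsmul_eq_mul, hM, hCdef]
  have final : M * L = M * ((Fintype.card E : ℝ) * Real.tanh β) := by
    rw [key2, ← Finset.sum_div, key3]
    field_simp
  exact mul_left_cancel₀ (ne_of_gt hMpos) final
end
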